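/- For all integers c ≥ 1 and l ≥ 1: cnt_O(c,l) = 1 + Σ_{i=1}^{l} C(l,i) · C(i+c−1, i), where C(n,k) denotes the binomial coefficient. -/
import Mathlib

/-- The number of witness data structures of the original quasi-polynomial algorithm of
Calude et al. (excluding the winning state), for `c` colours and witness length `l ≥ 1`. -/
def cntO : ℕ → ℕ → ℕ
  | _, 0 => 0
  | c, 1 => c + 1
  | c, l + 2 => cntO c (l + 1) + ∑ i ∈ Finset.Icc 1 c, cntO i (l + 1)
termination_by _ l => l

lemma hockey (k : ℕ) : ∀ c, 1 ≤ c →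
    ∑ j ∈ Finset.Icc 1 c, Nat.choose (k + j) (k + 1) = Nat.choose (k + c + 1) (k + 2) := by
  intro c
  induction c with
  | zero => omega
  | succ c ih =>
    intro _
    rcases Nat.eq_zero_or_pos c with rfl | hc
    · simp
    · rw [Finset.sum_Icc_succ_top (by omega), ih hc,
          show k + (c + 1) = k + c + 1 from by ring,
          show k + 2 = (k + 1) + 1 from rfl,
          Nat.choose_succ_succ (k + c + 1) (k + 1)]
      simp only [Nat.succ_eq_add_one]
      omega

lemma sum_eq (c l : ℕ) :
    ∑ i ∈ Finset.Icc 1 l, Nat.choose l i * Nat.choose (i + c - 1) i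
      = ∑ k ∈ Finset.range l, Nat.choose l (k + 1) * Nat.choose (k + c) (k + 1) := by
  rw [← Finset.Ico_add_one_right_eq_Icc, Finset.sum_Ico_eq_sum_range]
  apply Finset.sum_congr (by congr 1)
  intro k _
  congr 2 <;> omega

theorem cntO_closed_form (c l : ℕ) (hc : 1 ≤ c) (hl : 1 ≤ l) :
    cntO c l =
      1 + ∑ i ∈ Finset.Icc 1 l, Nat.choose l i * Nat.choose (i + c - 1) i := by
  induction l, hl using Nat.le_induction generalizing c with
  | base =>
    show cntO c 1 = _
    rw [sum_eq]
    simp [cntO]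
    omega
  | succ n hn ih =>
    obtain ⟨m, rfl⟩ : ∃ m, n = m + 1 := ⟨n - 1, by omega⟩
    show cntO c (m + 2) = _
    rw [cntO]
    rw [ih c hc, Finset.sum_congr rfl (fun i hi => ih i (Finset.mem_Icc.mp hi).1)]
    rw [sum_eq, sum_eq]
    set n := m + 1 with hndef
    -- rewrite inner sums too
    have hinner : ∀ i, 1 + ∑ j ∈ Finset.Icc 1 n, Nat.choose n j * Nat.choose (j + i - 1) j
        = 1 + ∑ k ∈ Finset.range n, Nat.choose n (k + 1) * Nat.choose (k + i) (k + 1) := by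
      intro i; rw [sum_eq]
    rw [Finset.sum_congr rfl (fun i _ => hinner i)]
    rw [Finset.sum_add_distrib]
    simp only [Finset.sum_const, Nat.card_Icc, smul_eq_mul, mul_one]
    have hswap : ∑ i ∈ Finset.Icc 1 c, ∑ k ∈ Finset.range n,
          Nat.choose n (k + 1) * Nat.choose (k + i) (k + 1)
        = ∑ k ∈ Finset.range n, Nat.choose n (k + 1) * Nat.choose (k + c + 1) (k + 2) := by
      rw [Finset.sum_comm]
      apply Finset.sum_congr rfl
      intro k _
      rw [← Finset.mul_sum, hockey k c hc]
    rw [hswap]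
    -- LHS expansion
    have hpascal : ∑ k ∈ Finset.range (n + 1), Nat.choose (n + 1) (k + 1) * Nat.choose (k + c) (k + 1)
        = (∑ k ∈ Finset.range (n + 1), Nat.choose n k * Nat.choose (k + c) (k + 1))
          + ∑ k ∈ Finset.range (n + 1), Nat.choose n (k + 1) * Nat.choose (k + c) (k + 1) := by
      rw [← Finset.sum_add_distrib]
      apply Finset.sum_congr rfl
      intro k _
      rw [Nat.choose_succ_succ, add_mul]
    rw [hpascal]
    have h1 : ∑ k ∈ Finset.range (n + 1), Nat.choose n (k + 1) * Nat.choose (k + c) (k + 1)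
        = ∑ k ∈ Finset.range n, Nat.choose n (k + 1) * Nat.choose (k + c) (k + 1) := by
      rw [Finset.sum_range_succ, Nat.choose_succ_self, zero_mul, add_zero]
    have h2 : ∑ k ∈ Finset.range (n + 1), Nat.choose n k * Nat.choose (k + c) (k + 1)
        = (∑ k ∈ Finset.range n, Nat.choose n (k + 1) * Nat.choose (k + c + 1) (k + 2)) + c := by
      rw [Finset.sum_range_succ']
      congr 1
      · apply Finset.sum_congr rfl
        intro k _
        congr 2 <;> omega
      · simp [Nat.choose_one_right]
    rw [h1, h2]
    omega
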